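/- Let φ : I → ℝ be smooth with φ′(y) ≠ 0, and consider the cylinder S parametrized by Φ(x, y) = (x, y, φ(y)) in M_f, with unit normal η = (1/|φ′(y)|)(1, −ε φ′(y), 0). Then g_f(∇_{Φ_y} Φ_y, η) = (1/|φ′(y)|) ( φ″(y) + (ε/2) φ′(y)³ f_y(y, φ(y)) ). Consequently, S is totally geodesic (i.e. g_f(∇_X Y, η) = 0 for all X, Y in the span of Φ_x, Φ_y) if and only if φ″(y) + (ε/2) φ′(y)³ f_y(y, φ(y)) = 0 for all y ∈ I. -/
import Mathlib


open Matrix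

/-- The Walker metric `g_f` of a strict Walker 3-manifold at a point `(x, y, z)`. -/
noncomputable def gf (ε : ℝ) (f : ℝ → ℝ → ℝ) (y z : ℝ) (u v : Fin 3 → ℝ) : ℝ :=
  u 0 * v 2 + u 2 * v 0 + ε * u 1 * v 1 + f y z * u 2 * v 2

/-- The covariant derivative `∇_{γ'} ξ` along a curve `γ` in the strict Walker
3-manifold, computed from the Christoffel symbols
`Γ^x_{yz} = Γ^x_{zy} = f_y/2`, `Γ^x_{zz} = f_z/2`, `Γ^y_{zz} = -(ε/2) f_y`. -/
noncomputable def covD (ε : ℝ) (fy fz : ℝ → ℝ → ℝ) (γ ξ : ℝ → Fin 3 → ℝ) (t : ℝ) :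
    Fin 3 → ℝ :=
  ![deriv (fun s => ξ s 0) t
      + (1 / 2) * fy (γ t 1) (γ t 2) *
        (ξ t 1 * deriv (fun s => γ s 2) t + ξ t 2 * deriv (fun s => γ s 1) t)
      + (1 / 2) * fz (γ t 1) (γ t 2) * ξ t 2 * deriv (fun s => γ s 2) t,
    deriv (fun s => ξ s 1) t
      - (ε / 2) * fy (γ t 1) (γ t 2) * ξ t 2 * deriv (fun s => γ s 2) t,
    deriv (fun s => ξ s 2) t]

/-- `∇_{Φ_x}Φ_x` for the cylinder `Φ(x, y) = (x, y, φ(y))` (it vanishes). -/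
noncomputable def nabXX1 (ε : ℝ) (fy fz : ℝ → ℝ → ℝ) (φ : ℝ → ℝ) (y : ℝ) : Fin 3 → ℝ :=
  covD ε fy fz (fun s => ![s, y, φ y]) (fun _ => ![1, 0, 0]) 0

/-- `∇_{Φ_x}Φ_y` for the cylinder `Φ(x, y) = (x, y, φ(y))` (it vanishes). -/
noncomputable def nabXY1 (ε : ℝ) (fy fz : ℝ → ℝ → ℝ) (φ : ℝ → ℝ) (y : ℝ) : Fin 3 → ℝ :=
  covD ε fy fz (fun s => ![s, y, φ y]) (fun _ => ![0, 1, deriv φ y]) 0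

/-- `∇_{Φ_y}Φ_x` for the cylinder `Φ(x, y) = (x, y, φ(y))` (it vanishes). -/
noncomputable def nabYX1 (ε : ℝ) (fy fz : ℝ → ℝ → ℝ) (φ : ℝ → ℝ) (y : ℝ) : Fin 3 → ℝ :=
  covD ε fy fz (fun s => ![0, s, φ s]) (fun _ => ![1, 0, 0]) y

/-- `∇_{Φ_y}Φ_y` for the cylinder `Φ(x, y) = (x, y, φ(y))`. -/
noncomputable def nabYY1 (ε : ℝ) (fy fz : ℝ → ℝ → ℝ) (φ : ℝ → ℝ) (y : ℝ) : Fin 3 → ℝ :=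
  covD ε fy fz (fun s => ![0, s, φ s]) (fun s => ![0, 1, deriv φ s]) y

lemma nabYY1_eq (ε : ℝ) (fy fz : ℝ → ℝ → ℝ) (φ : ℝ → ℝ) (y : ℝ) :
    nabYY1 ε fy fz φ y =
      ![fy y (φ y) * deriv φ y + (1/2) * fz y (φ y) * (deriv φ y)^2,
        -(ε/2) * fy y (φ y) * (deriv φ y)^2,
        deriv (deriv φ) y] := by
  funext i
  fin_cases i <;> simp [nabYY1, covD, deriv_const, deriv_id''] <;> ring

lemma nabXX1_eq (ε : ℝ) (fy fz : ℝ → ℝ → ℝ) (φ : ℝ → ℝ) (y : ℝ) :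
    nabXX1 ε fy fz φ y = ![0, 0, 0] := by
  funext i
  fin_cases i <;> simp [nabXX1, covD, deriv_const]

lemma nabXY1_eq (ε : ℝ) (fy fz : ℝ → ℝ → ℝ) (φ : ℝ → ℝ) (y : ℝ) :
    nabXY1 ε fy fz φ y = ![0, 0, 0] := by
  funext i
  fin_cases i <;> simp [nabXY1, covD, deriv_const]

lemma nabYX1_eq (ε : ℝ) (fy fz : ℝ → ℝ → ℝ) (φ : ℝ → ℝ) (y : ℝ) :
    nabYX1 ε fy fz φ y = ![0, 0, 0] := by
  funext i
  fin_cases i <;> simp [nabYX1, covD, deriv_const]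

/-- For the cylinder `S : Φ(x, y) = (x, y, φ(y))` in `M_f` with `φ′ ≠ 0` and unit
normal `η = (1/|φ′|)(1, −ε φ′, 0)`, one has
`g_f(∇_{Φ_y}Φ_y, η) = (1/|φ′|)(φ″ + (ε/2) φ′³ f_y(y, φ(y)))`; consequently `S` is
totally geodesic, i.e. `g_f(∇_X Y, η) = 0` for all `X, Y` in the span of
`(Φ_x, Φ_y)`, if and only if `φ″ + (ε/2) φ′³ f_y(y, φ(y)) = 0` for all `y`. -/
theorem stmt_12 (ε : ℝ) (hε : ε = 1 ∨ ε = -1) (f fy fz : ℝ → ℝ → ℝ)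
    (hf : ContDiff ℝ (⊤ : ℕ∞) (Function.uncurry f))
    (hfy : ∀ y z : ℝ, HasDerivAt (fun t => f t z) (fy y z) y)
    (hfz : ∀ y z : ℝ, HasDerivAt (fun t => f y t) (fz y z) z)
    (φ : ℝ → ℝ) (hφ : ContDiff ℝ (⊤ : ℕ∞) φ) (hφ' : ∀ y : ℝ, deriv φ y ≠ 0) :
    (∀ y : ℝ,
      gf ε f y (φ y) (nabYY1 ε fy fz φ y) ((|deriv φ y|)⁻¹ • ![1, -ε * deriv φ y, 0]) =
        (|deriv φ y|)⁻¹ *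
          (deriv (deriv φ) y + (ε / 2) * (deriv φ y) ^ 3 * fy y (φ y))) ∧
    ((∀ y a b c d : ℝ,
        gf ε f y (φ y)
          ((a * c) • nabXX1 ε fy fz φ y + (a * d) • nabXY1 ε fy fz φ y +
            (b * c) • nabYX1 ε fy fz φ y + (b * d) • nabYY1 ε fy fz φ y)
          ((|deriv φ y|)⁻¹ • ![1, -ε * deriv φ y, 0]) = 0) ↔
      (∀ y : ℝ,
        deriv (deriv φ) y + (ε / 2) * (deriv φ y) ^ 3 * fy y (φ y) = 0)) := by
  have hε2 : ε * ε = 1 := by rcases hε with rfl | rfl <;> norm_num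
  have key : ∀ y : ℝ,
      gf ε f y (φ y) (nabYY1 ε fy fz φ y) ((|deriv φ y|)⁻¹ • ![1, -ε * deriv φ y, 0]) =
        (|deriv φ y|)⁻¹ *
          (deriv (deriv φ) y + (ε / 2) * (deriv φ y) ^ 3 * fy y (φ y)) := by
    intro y
    simp [gf, nabYY1_eq, Pi.smul_apply, smul_eq_mul]
    linear_combination (ε / 2 * fy y (φ y) * deriv φ y ^ 3 * (|deriv φ y|)⁻¹) * hε2
  refine ⟨key, ?_⟩
  constructor
  · intro h y
    have h1 := h y 0 1 0 1
    rw [nabXX1_eq, nabXY1_eq, nabYX1_eq] at h1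
    have hu : ((0 * 0 : ℝ)) • (![0, 0, 0] : Fin 3 → ℝ) + (0 * 1 : ℝ) • ![0, 0, 0] +
        (1 * 0 : ℝ) • ![0, 0, 0] + (1 * 1 : ℝ) • nabYY1 ε fy fz φ y = nabYY1 ε fy fz φ y := by
      funext i; fin_cases i <;> simp
    rw [hu] at h1
    have h2 := h1
    rw [key y] at h2
    have hne : (|deriv φ y|)⁻¹ ≠ 0 := inv_ne_zero (by simpa [abs_ne_zero] using hφ' y)
    exact (mul_eq_zero.mp h2).resolve_left hne
  · intro h y a b c d
    rw [nabXX1_eq, nabXY1_eq, nabYX1_eq, nabYY1_eq]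
    have h0 := h y
    simp [gf, Pi.smul_apply, smul_eq_mul, Pi.add_apply]
    linear_combination (b * d * (|deriv φ y|)⁻¹) * h0 +
      (b * d * (|deriv φ y|)⁻¹ * (ε / 2) * fy y (φ y) * deriv φ y ^ 3) * hε2
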